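/- arXiv:1601.04551 — 2 statements merged into one kernel-verified Lean document; each statement's English description precedes it below -/
import Mathlib

section
/- The tensor (categorical) product G × H of two connected graphs G and H is connected if and only if at least one of G and H is non-bipartite. -/
/-!
A walk in `G × H` is exactly a pair of walks of the same length in `G` and `H`. If both factors are
bipartite and `a ~ b` in `G`, a walk from `(a, c)` to `(b, c)` would project to an even closed walk
at `c` in `H` and to a walk `a → b` that the edge `ba` closes up into an odd closed walk in `G`.
Conversely, without isolated vertices a walk can be lengthened by any even amount by going back and
forth along an edge, and an odd closed walk in a connected non-bipartite factor lets its walks take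
either parity; so any two vertices of `G × H` are joined by walks of one common length in the
factors.
-/

open SimpleGraph

variable {α β γ : Type*}

/-- Tensor (categorical) product of simple graphs. -/
def tensor (G : SimpleGraph α) (H : SimpleGraph β) : SimpleGraph (α × β) where
  Adj x y := G.Adj x.1 y.1 ∧ H.Adj x.2 y.2
  symm := ⟨fun _ _ ⟨h1, h2⟩ => ⟨h1.symm, h2.symm⟩⟩
  loopless := ⟨fun x ⟨h1, _⟩ => G.loopless.irrefl x.1 h1⟩

/-- Projection of a walk in the tensor product to the first factor. -/
def projG {G : SimpleGraph α} {H : SimpleGraph β} :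
    ∀ {x y : α × β}, (tensor G H).Walk x y → G.Walk x.1 y.1
  | _, _, SimpleGraph.Walk.nil => SimpleGraph.Walk.nil
  | _, _, SimpleGraph.Walk.cons h p => SimpleGraph.Walk.cons h.1 (projG p)

/-- Projection of a walk in the tensor product to the second factor. -/
def projH {G : SimpleGraph α} {H : SimpleGraph β} :
    ∀ {x y : α × β}, (tensor G H).Walk x y → H.Walk x.2 y.2
  | _, _, SimpleGraph.Walk.nil => SimpleGraph.Walk.nil
  | _, _, SimpleGraph.Walk.cons h p => SimpleGraph.Walk.cons h.2 (projH p)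

/-- One-step reduction: deleting a consecutive backtracking pair `e, e⁻¹`. -/
inductive RedStep (G : SimpleGraph α) : ∀ {u v : α}, G.Walk u v → G.Walk u v → Prop
  | cancel {u v a b : α} (h : G.Adj a b) (p : G.Walk u a) (q : G.Walk a v) :
      RedStep G (p.append (SimpleGraph.Walk.cons h (SimpleGraph.Walk.cons h.symm q)))
        (p.append q)

/-- A walk is reduced if no backtracking cancellation applies to it. -/
def Reduced {G : SimpleGraph α} {u v : α} (W : G.Walk u v) : Prop :=
  ∀ W', ¬ RedStep G W W'

/-- Homotopy of walks: equivalence generated by cancellations. -/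
def RedEquiv (G : SimpleGraph α) {u v : α} (W W' : G.Walk u v) : Prop :=
  Relation.EqvGen (fun p q => RedStep G p q) W W'

/-- One elementary step of square-equivalence. -/
inductive SqStep (G : SimpleGraph α) : ∀ {u v : α}, G.Walk u v → G.Walk u v → Prop
  | cancel {u v a b : α} (h : G.Adj a b) (p : G.Walk u a) (q : G.Walk a v) :
      SqStep G (p.append (SimpleGraph.Walk.cons h (SimpleGraph.Walk.cons h.symm q)))
        (p.append q)
  | square {u v a b c d : α} (hab : G.Adj a b) (hbc : G.Adj b c) (had : G.Adj a d)
      (hdc : G.Adj d c) (p : G.Walk u a) (q : G.Walk c v) :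
      SqStep G (p.append (SimpleGraph.Walk.cons hab (SimpleGraph.Walk.cons hbc q)))
        (p.append (SimpleGraph.Walk.cons had (SimpleGraph.Walk.cons hdc q)))

/-- Square-equivalence of walks. -/
def SqEquiv (G : SimpleGraph α) {u v : α} (W W' : G.Walk u v) : Prop :=
  Relation.EqvGen (fun p q => SqStep G p q) W W'

/-- Natural-number power of a closed walk (iterated concatenation). -/
def wpow {G : SimpleGraph α} {u : α} (W : G.Walk u u) : ℕ → G.Walk u u
  | 0 => SimpleGraph.Walk.nil
  | n + 1 => W.append (wpow W n)

/-- Integer power of a closed walk. -/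
def wzpow {G : SimpleGraph α} {u : α} (W : G.Walk u u) : ℤ → G.Walk u u
  | Int.ofNat n => wpow W n
  | Int.negSucc n => wpow W.reverse (n + 1)

/-- A walk `p` is a prefix of `q` (same starting vertex). -/
def WalkPrefix {G : SimpleGraph α} {u x y : α} (p : G.Walk u x) (q : G.Walk u y) : Prop :=
  ∃ r : G.Walk x y, q = p.append r

/-- `K` is square-free: every square is trivial. -/
def SqFree (K : SimpleGraph γ) : Prop :=
  ∀ a b c d : γ, K.Adj a b → K.Adj b c → K.Adj c d → K.Adj d a → a = c ∨ b = d

/-- The circular clique `K_{p/q}` on `ZMod p`. -/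
def circClique (p q : ℕ) : SimpleGraph (ZMod p) where
  Adj i j := i ≠ j ∧ ∃ k : ℕ, q ≤ k ∧ k ≤ p - q ∧ (j = i + (k : ZMod p) ∨ i = j + (k : ZMod p))
  symm := ⟨by
    rintro i j ⟨hne, k, h1, h2, h3 | h3⟩
    · exact ⟨hne.symm, k, h1, h2, Or.inr h3⟩
    · exact ⟨hne.symm, k, h1, h2, Or.inl h3⟩⟩
  loopless := ⟨fun i h => h.1 rfl⟩

variable {G : SimpleGraph α} {H : SimpleGraph β}

def tensorFst : tensor G H →g G := ⟨Prod.fst, And.left⟩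

def tensorSnd : tensor G H →g H := ⟨Prod.snd, And.right⟩

def tensorComm : tensor G H ≃g tensor H G :=
  ⟨Equiv.prodComm α β, And.comm⟩

lemma not_reachable_tensor_of_colorable (hG : G.Colorable 2) (hH : H.Colorable 2) {a b : α}
    (hab : G.Adj a b) (c : β) : ¬ (tensor G H).Reachable (a, c) (b, c) := by
  rintro ⟨w⟩
  obtain ⟨p, hp⟩ : ∃ p : G.Walk a b, p.length = w.length := ⟨w.map tensorFst, w.length_map _⟩
  obtain ⟨q, hq⟩ : ∃ q : H.Walk c c, q.length = w.length := ⟨w.map tensorSnd, w.length_map _⟩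
  have hq_even := two_colorable_iff_forall_loop_even.mp hH c q
  have hp_odd : Odd (p.concat hab.symm).length := by
    rw [Walk.length_concat, hp, ← hq]
    exact hq_even.add_one
  exact Nat.not_even_iff_odd.mpr hp_odd (two_colorable_iff_forall_loop_even.mp hG a _)

lemma tensor_reachable_of_length_eq {a a' : α} (p : G.Walk a a') :
    ∀ {b b' : β} (q : H.Walk b b'), p.length = q.length →
      (tensor G H).Reachable (a, b) (a', b') := by
  induction p with
  | nil =>
    rintro b b' q hq
    rw [Walk.eq_of_length_eq_zero hq.symm]
  | cons hadj p ih =>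
    rintro b b' (_ | ⟨hadj', q⟩) hq
    · simp at hq
    · exact (Adj.reachable (G := tensor G H) ⟨hadj, hadj'⟩).trans (ih q (by simpa using hq))

lemma SimpleGraph.Walk.exists_length_eq_of_le {a b : α} (p : G.Walk a b) (hb : ∃ c, G.Adj b c)
    {n : ℕ} (hn : p.length ≤ n) (hpar : n % 2 = p.length % 2) : ∃ p' : G.Walk a b, p'.length = n := by
  obtain ⟨c, hbc⟩ := hb
  obtain ⟨k, rfl⟩ : ∃ k, n = p.length + 2 * k := ⟨(n - p.length) / 2, by omega⟩
  induction k with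
  | zero => exact ⟨p, rfl⟩
  | succ k ih =>
    obtain ⟨p', hp'⟩ := ih (by omega) (by omega)
    exact ⟨(p'.concat hbc).concat hbc.symm, by simp only [Walk.length_concat, hp']; ring⟩

lemma exists_walk_length_mod_two (hG : G.Preconnected) (hG2 : ¬ G.Colorable 2) (a b : α)
    (n : ℕ) : ∃ p : G.Walk a b, p.length % 2 = n % 2 := by
  obtain ⟨u, w, hw⟩ : ∃ u, ∃ w : G.Walk u u, Odd w.length := by
    simpa [two_colorable_iff_forall_loop_even] using hG2
  obtain ⟨p⟩ := hG a b
  obtain ⟨t⟩ := hG b u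
  by_cases hp : p.length % 2 = n % 2
  · exact ⟨p, hp⟩
  · refine ⟨p.append (t.append (w.append t.reverse)), ?_⟩
    obtain ⟨k, hk⟩ := hw
    simp only [Walk.length_append, Walk.length_reverse]
    omega

lemma tensor_preconnected_of_not_colorable (hG : G.Preconnected) (hG2 : ¬ G.Colorable 2)
    (hGadj : ∀ a, ∃ a', G.Adj a a') (hH : H.Preconnected) (hHadj : ∀ b, ∃ b', H.Adj b b') :
    (tensor G H).Preconnected := by
  rintro ⟨a, b⟩ ⟨a', b'⟩
  obtain ⟨q⟩ := hH b b'
  obtain ⟨p, hpq⟩ := exists_walk_length_mod_two hG hG2 a a' q.length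
  obtain ⟨p', hp'⟩ := p.exists_length_eq_of_le (hGadj a') (le_max_left p.length q.length)
    (by omega)
  obtain ⟨q', hq'⟩ := q.exists_length_eq_of_le (hHadj b') (le_max_right p.length q.length)
    (by omega)
  exact tensor_reachable_of_length_eq p' q' (hp'.trans hq'.symm)

/-- for connected graphs `G`, `H` each having an edge, the tensor product
`G × H` is connected iff at least one of `G`, `H` is non-bipartite. -/
theorem tensor_connected_iff {G : SimpleGraph α} {H : SimpleGraph β}
    (hG : G.Connected) (hH : H.Connected)
    (hGe : ∃ a b : α, G.Adj a b) (hHe : ∃ a b : β, H.Adj a b) :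
    (tensor G H).Connected ↔ (¬ G.Colorable 2 ∨ ¬ H.Colorable 2) := by
  obtain ⟨a, b, hab⟩ := hGe
  obtain ⟨c, d, hcd⟩ := hHe
  have : Nontrivial α := nontrivial_of_ne a b hab.ne
  have : Nontrivial β := nontrivial_of_ne c d hcd.ne
  have hGadj := hG.preconnected.exists_adj_of_nontrivial
  have hHadj := hH.preconnected.exists_adj_of_nontrivial
  constructor
  · intro hGH
    by_contra! ⟨hG2, hH2⟩
    exact not_reachable_tensor_of_colorable hG2 hH2 hab c (hGH.preconnected _ _)
  · rintro (hG2 | hH2)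
    · exact ⟨tensor_preconnected_of_not_colorable hG.preconnected hG2 hGadj hH.preconnected hHadj⟩
    · exact tensorComm.connected_iff.mpr
        ⟨tensor_preconnected_of_not_colorable hH.preconnected hH2 hHadj hG.preconnected hGadj⟩
end

section
/- Generalized version of the bipartite-cut lemma: let mu : G × H -> K be a graph homomorphism, H' an induced subgraph of H, and G' the spanning subgraph of G obtained by removing every edge gg' of G such that mu(g,h)mu(g',h') is an edge of K for all h, h' in V(H'). If there is a graph homomorphism G' -> H', then there is a graph homomorphism G -> K. -/
open SimpleGraph

variable {α β γ : Type*}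

/-- generalized bipartite-cut lemma. Let `mu : G × H → K`, let `H'` be
the subgraph of `H` induced on a vertex set `s`, and let `G'` be the spanning
subgraph of `G` obtained by removing every edge `gg'` such that `mu(g,h)mu(g',h')`
is an edge of `K` for all `h, h' ∈ s`. If `G' → H'`, then `G → K`. -/
theorem hom_of_cut_hom {G : SimpleGraph α} {H : SimpleGraph β} {K : SimpleGraph γ}
    (mu : tensor G H →g K) (s : Set β) (G' : SimpleGraph α)
    (hG' : ∀ g g' : α, G'.Adj g g' ↔
      G.Adj g g' ∧ ¬ (∀ h ∈ s, ∀ h' ∈ s, K.Adj (mu (g, h)) (mu (g', h'))))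
    (hom : G' →g (H.induce s)) :
    Nonempty (G →g K) := by
  refine ⟨⟨fun g => mu (g, hom g), fun {g g'} hgg' => ?_⟩⟩
  by_cases hcut : ∀ h ∈ s, ∀ h' ∈ s, K.Adj (mu (g, h)) (mu (g', h'))
  · exact hcut _ (hom g).2 _ (hom g').2
  · exact mu.map_adj ⟨hgg', hom.map_adj ((hG' g g').2 ⟨hgg', hcut⟩)⟩
end
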